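/- Let (ρ, u) be a smooth (C^∞) solution of the steady isentropic compressible Euler equations on U with ρ > 0 and u ≠ 0 everywhere, and suppose the Bernoulli function B is constant on U. Then the scaled helicity (u·w)/(ρ|u|²) is transported along particle paths: (u·∇)((u·w)/(ρ|u|²)) = 0 on U, where w = curl u. -/

import Mathlib

/-- Partial derivative in direction `i` of a scalar function on `ℝ³`. -/
noncomputable def pd (i : Fin 3) (f : (Fin 3 → ℝ) → ℝ) (x : Fin 3 → ℝ) : ℝ :=
  fderiv ℝ f x (Pi.single i 1)

/-- The curl of a vector field on `ℝ³`. -/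
noncomputable def curl (u : Fin 3 → (Fin 3 → ℝ) → ℝ) : Fin 3 → (Fin 3 → ℝ) → ℝ :=
  ![fun x => pd 1 (u 2) x - pd 2 (u 1) x,
    fun x => pd 2 (u 0) x - pd 0 (u 2) x,
    fun x => pd 0 (u 1) x - pd 1 (u 0) x]

open Topology

variable {f g h : (Fin 3 → ℝ) → ℝ} {x : Fin 3 → ℝ} {i : Fin 3}

lemma pd_congr {g} (hfg : f =ᶠ[𝓝 x] g) : pd i f x = pd i g x := by
  unfold pd; rw [hfg.fderiv_eq]

lemma pd_const (c : ℝ) : pd i (fun _ => c) x = 0 := by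
  unfold pd; simp

lemma pd_add (hf : DifferentiableAt ℝ f x) (hg : DifferentiableAt ℝ g x) :
    pd i (fun y => f y + g y) x = pd i f x + pd i g x := by
  unfold pd; rw [fderiv_fun_add hf hg]; simp

lemma pd_sub (hf : DifferentiableAt ℝ f x) (hg : DifferentiableAt ℝ g x) :
    pd i (fun y => f y - g y) x = pd i f x - pd i g x := by
  unfold pd; rw [fderiv_fun_sub hf hg]; simp

lemma pd_mul (hf : DifferentiableAt ℝ f x) (hg : DifferentiableAt ℝ g x) :
    pd i (fun y => f y * g y) x = pd i f x * g x + f x * pd i g x := by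
  unfold pd; rw [fderiv_fun_mul hf hg]; simp; ring

lemma pd_inv (hg : DifferentiableAt ℝ g x) (h0 : g x ≠ 0) :
    pd i (fun y => (g y)⁻¹) x = -(pd i g x) / g x ^ 2 := by
  have hd : HasDerivAt (fun t : ℝ => t⁻¹) (-((g x) ^ 2)⁻¹) (g x) := hasDerivAt_inv h0
  have h2 : HasFDerivAt (fun y => (g y)⁻¹) ((-((g x) ^ 2)⁻¹) • fderiv ℝ g x) x :=
    hd.comp_hasFDerivAt x hg.hasFDerivAt
  unfold pd; rw [h2.fderiv]; simp; try ring

lemma pd_div (hf : DifferentiableAt ℝ f x) (hg : DifferentiableAt ℝ g x) (h0 : g x ≠ 0) :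
    pd i (fun y => f y / g y) x = (pd i f x * g x - f x * pd i g x) / g x ^ 2 := by
  have h1 : pd i (fun y => f y / g y) x = pd i (fun y => f y * (g y)⁻¹) x := by
    simp only [div_eq_mul_inv]
  rw [h1, pd_mul (g := fun y => (g y)⁻¹) hf (hg.inv h0), pd_inv hg h0]
  field_simp
  ring

lemma pd_div_const (hf : DifferentiableAt ℝ f x) (c : ℝ) :
    pd i (fun y => f y / c) x = pd i f x / c := by
  simp only [div_eq_mul_inv]
  rw [pd_mul hf (differentiableAt_const _), pd_const]
  ring

lemma pd_rpow (hf : DifferentiableAt ℝ f x) (hpos : 0 < f x) (c : ℝ) :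
    pd i (fun y => f y ^ c) x = c * f x ^ (c - 1) * pd i f x := by
  have hd : HasDerivAt (fun t : ℝ => t ^ c) (c * f x ^ (c - 1)) (f x) :=
    Real.hasDerivAt_rpow_const (Or.inl hpos.ne')
  have h2 : HasFDerivAt (fun y => f y ^ c) ((c * f x ^ (c - 1)) • fderiv ℝ f x) x :=
    hd.comp_hasFDerivAt x hf.hasFDerivAt
  unfold pd
  rw [h2.fderiv]; simp; try ring

lemma diffAt_div {f g : (Fin 3 → ℝ) → ℝ} {x : Fin 3 → ℝ} (hf : DifferentiableAt ℝ f x)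
    (hg : DifferentiableAt ℝ g x) (h0 : g x ≠ 0) :
    DifferentiableAt ℝ (fun y => f y / g y) x := by
  simp only [div_eq_mul_inv]
  exact hf.mul (hg.inv h0)

lemma differentiableAt_pd (hf : ContDiffAt ℝ (⊤ : ℕ∞) f x) (j : Fin 3) :
    DifferentiableAt ℝ (fun y => pd j f y) x := by
  have h1 : ContDiffAt ℝ (⊤ : ℕ∞) (fderiv ℝ f) x := hf.fderiv_right (by simp)
  exact (h1.differentiableAt (by simp)).clm_apply (differentiableAt_const _)

lemma pd_comm (hf : ContDiffAt ℝ (⊤ : ℕ∞) f x) (i j : Fin 3) :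
    pd i (fun y => pd j f y) x = pd j (fun y => pd i f y) x := by
  have h1 : ContDiffAt ℝ (⊤ : ℕ∞) (fderiv ℝ f) x := hf.fderiv_right (by simp)
  have h2 : HasFDerivAt (fderiv ℝ f) (fderiv ℝ (fderiv ℝ f) x) x :=
    (h1.differentiableAt (by simp)).hasFDerivAt
  have h3 : ∀ᶠ y in 𝓝 x, HasFDerivAt f (fderiv ℝ f y) y := by
    filter_upwards [(hf.of_le (m := 1) (by simp)).eventually (by simp)] with y hy
    exact (hy.differentiableAt (by simp)).hasFDerivAt
  have hsym := second_derivative_symmetric_of_eventually h3 h2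
  have key : ∀ (k : Fin 3) (b : Fin 3 → ℝ), pd k (fun y => fderiv ℝ f y b) x
      = fderiv ℝ (fderiv ℝ f) x (Pi.single k 1) b := by
    intro k b
    unfold pd
    rw [fderiv_clm_apply (h1.differentiableAt (by simp)) (differentiableAt_const b)]
    simp
  have e1 : pd i (fun y => pd j f y) x
      = fderiv ℝ (fderiv ℝ f) x (Pi.single i 1) (Pi.single j 1) := key i (Pi.single j 1)
  have e2 : pd j (fun y => pd i f y) x
      = fderiv ℝ (fderiv ℝ f) x (Pi.single j 1) (Pi.single i 1) := key j (Pi.single i 1)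
  rw [e1, e2, hsym]

/-- for a smooth Euler flow with constant Bernoulli function and no
vacuum or stagnation points, the scaled helicity `(u·w)/(ρ|u|²)` is transported
along particle paths. -/
theorem scaled_helicity_transported
    (U : Set (Fin 3 → ℝ)) (hU : IsOpen U) (γ : ℝ) (hγ1 : 1 < γ) (hγ3 : γ < 3)
    (ρ : (Fin 3 → ℝ) → ℝ) (u : Fin 3 → (Fin 3 → ℝ) → ℝ)
    (hρ : ContDiffOn ℝ (⊤ : ℕ∞) ρ U) (hu : ∀ i, ContDiffOn ℝ (⊤ : ℕ∞) (u i) U)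
    (hρpos : ∀ x ∈ U, 0 < ρ x)
    (hnostag : ∀ x ∈ U, ¬(u 0 x = 0 ∧ u 1 x = 0 ∧ u 2 x = 0))
    (hmass : ∀ x ∈ U,
      pd 0 (fun y => ρ y * u 0 y) x + pd 1 (fun y => ρ y * u 1 y) x
        + pd 2 (fun y => ρ y * u 2 y) x = 0)
    (hmom : ∀ i : Fin 3, ∀ x ∈ U,
      pd 0 (fun y => ρ y * u i y * u 0 y) x + pd 1 (fun y => ρ y * u i y * u 1 y) x
        + pd 2 (fun y => ρ y * u i y * u 2 y) x + pd i (fun y => ρ y ^ γ / γ) x = 0)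
    (B₀ : ℝ)
    (hBconst : ∀ x ∈ U,
      (u 0 x ^ 2 + u 1 x ^ 2 + u 2 x ^ 2) / 2 + ρ x ^ (γ - 1) / (γ - 1) = B₀)
    (uw n2 : (Fin 3 → ℝ) → ℝ)
    (huw : uw = fun y => u 0 y * curl u 0 y + u 1 y * curl u 1 y + u 2 y * curl u 2 y)
    (hn2 : n2 = fun y => u 0 y ^ 2 + u 1 y ^ 2 + u 2 y ^ 2) :
    ∀ x ∈ U,
      u 0 x * pd 0 (fun y => uw y / (ρ y * n2 y)) x
        + u 1 x * pd 1 (fun y => uw y / (ρ y * n2 y)) x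
        + u 2 x * pd 2 (fun y => uw y / (ρ y * n2 y)) x = 0 := by
  have hγ0 : γ ≠ 0 := by linarith
  have hγ1' : γ - 1 ≠ 0 := by linarith
  -- curl components
  have hcurl0 : curl u 0 = fun z => pd 1 (u 2) z - pd 2 (u 1) z := rfl
  have hcurl1 : curl u 1 = fun z => pd 2 (u 0) z - pd 0 (u 2) z := rfl
  have hcurl2 : curl u 2 = fun z => pd 0 (u 1) z - pd 1 (u 0) z := rfl
  -- differentiability
  have hucd : ∀ (i : Fin 3), ∀ y ∈ U, ContDiffAt ℝ (⊤ : ℕ∞) (u i) y := fun i y hy =>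
    (hu i).contDiffAt (hU.mem_nhds hy)
  have hud : ∀ (i : Fin 3), ∀ y ∈ U, DifferentiableAt ℝ (u i) y := fun i y hy =>
    (hucd i y hy).differentiableAt (by simp)
  have hρd : ∀ y ∈ U, DifferentiableAt ℝ ρ y := fun y hy =>
    (hρ.contDiffAt (hU.mem_nhds hy)).differentiableAt (by simp)
  have hpdud : ∀ (i j : Fin 3), ∀ y ∈ U, DifferentiableAt ℝ (fun z => pd j (u i) z) y :=
    fun i j y hy => differentiableAt_pd (hucd i y hy) j
  have hwd0 : ∀ y ∈ U, DifferentiableAt ℝ (curl u 0) y := by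
    intro y hy; rw [hcurl0]; exact (hpdud 2 1 y hy).sub (hpdud 1 2 y hy)
  have hwd1 : ∀ y ∈ U, DifferentiableAt ℝ (curl u 1) y := by
    intro y hy; rw [hcurl1]; exact (hpdud 0 2 y hy).sub (hpdud 2 0 y hy)
  have hwd2 : ∀ y ∈ U, DifferentiableAt ℝ (curl u 2) y := by
    intro y hy; rw [hcurl2]; exact (hpdud 1 0 y hy).sub (hpdud 0 1 y hy)
  -- positivity of |u|^2
  have hn2pos : ∀ y ∈ U, 0 < u 0 y ^ 2 + u 1 y ^ 2 + u 2 y ^ 2 := by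
    intro y hy
    rcases lt_or_ge 0 (u 0 y ^ 2 + u 1 y ^ 2 + u 2 y ^ 2) with h | h
    · exact h
    · exfalso
      apply hnostag y hy
      refine ⟨?_, ?_, ?_⟩ <;> nlinarith [sq_nonneg (u 0 y), sq_nonneg (u 1 y), sq_nonneg (u 2 y)]
  -- expanded mass equation
  have hmass' : ∀ y ∈ U,
      pd 0 ρ y * u 0 y + ρ y * pd 0 (u 0) y + pd 1 ρ y * u 1 y + ρ y * pd 1 (u 1) y
        + pd 2 ρ y * u 2 y + ρ y * pd 2 (u 2) y = 0 := by
    intro y hy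
    have h := hmass y hy
    rw [pd_mul (hρd y hy) (hud 0 y hy), pd_mul (hρd y hy) (hud 1 y hy),
        pd_mul (hρd y hy) (hud 2 y hy)] at h
    linarith
  -- pressure derivative
  have hpress : ∀ y ∈ U, ∀ i : Fin 3,
      pd i (fun z => ρ z ^ γ / γ) y = ρ y ^ (γ - 1) * pd i ρ y := by
    intro y hy i
    rw [pd_div_const ((hρd y hy).rpow_const (Or.inl (hρpos y hy).ne')) γ,
        pd_rpow (hρd y hy) (hρpos y hy) γ]
    field_simp
  -- Euler equation (convective form)
  have heuler : ∀ (i : Fin 3), ∀ y ∈ U,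
      u 0 y * pd 0 (u i) y + u 1 y * pd 1 (u i) y + u 2 y * pd 2 (u i) y
        + ρ y ^ (γ - 2) * pd i ρ y = 0 := by
    intro i y hy
    have h := hmom i y hy
    rw [pd_mul (f := fun y => ρ y * u i y) ((hρd y hy).mul (hud i y hy)) (hud 0 y hy),
        pd_mul (f := fun y => ρ y * u i y) ((hρd y hy).mul (hud i y hy)) (hud 1 y hy),
        pd_mul (f := fun y => ρ y * u i y) ((hρd y hy).mul (hud i y hy)) (hud 2 y hy),
        pd_mul (hρd y hy) (hud i y hy), pd_mul (hρd y hy) (hud i y hy),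
        pd_mul (hρd y hy) (hud i y hy), hpress y hy i] at h
    have hsplit : ρ y ^ (γ - 1) = ρ y * ρ y ^ (γ - 2) := by
      rw [show γ - 1 = 1 + (γ - 2) by ring, Real.rpow_add (hρpos y hy), Real.rpow_one]
    rw [hsplit] at h
    have key : ρ y * (u 0 y * pd 0 (u i) y + u 1 y * pd 1 (u i) y + u 2 y * pd 2 (u i) y
        + ρ y ^ (γ - 2) * pd i ρ y) = 0 := by
      linear_combination h - u i y * hmass' y hy
    exact (mul_eq_zero.mp key).resolve_left (hρpos y hy).ne'
  -- Bernoulli gradient is zero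
  have hpress2 : ∀ y ∈ U, ∀ i : Fin 3,
      pd i (fun z => ρ z ^ (γ - 1) / (γ - 1)) y = ρ y ^ (γ - 2) * pd i ρ y := by
    intro y hy i
    rw [pd_div_const ((hρd y hy).rpow_const (Or.inl (hρpos y hy).ne')) (γ - 1),
        pd_rpow (hρd y hy) (hρpos y hy) (γ - 1), show γ - 1 - 1 = γ - 2 by ring]
    field_simp
  have hB : ∀ (i : Fin 3), ∀ y ∈ U,
      u 0 y * pd i (u 0) y + u 1 y * pd i (u 1) y + u 2 y * pd i (u 2) y
        + ρ y ^ (γ - 2) * pd i ρ y = 0 := by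
    intro i y hy
    have hc : pd i (fun z => (u 0 z * u 0 z + u 1 z * u 1 z + u 2 z * u 2 z) / 2
        + ρ z ^ (γ - 1) / (γ - 1)) y = 0 := by
      rw [pd_congr (g := fun _ => B₀) (Filter.eventuallyEq_of_mem (hU.mem_nhds hy)
        (fun z hz => by simpa [← hBconst z hz] using by ring)), pd_const]
    have hq0 : DifferentiableAt ℝ (fun z => u 0 z * u 0 z) y := (hud 0 y hy).mul (hud 0 y hy)
    have hq1 : DifferentiableAt ℝ (fun z => u 1 z * u 1 z) y := (hud 1 y hy).mul (hud 1 y hy)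
    have hq2 : DifferentiableAt ℝ (fun z => u 2 z * u 2 z) y := (hud 2 y hy).mul (hud 2 y hy)
    have hPd : DifferentiableAt ℝ (fun z => ρ z ^ (γ - 1) / (γ - 1)) y :=
      diffAt_div ((hρd y hy).rpow_const (Or.inl (hρpos y hy).ne')) (differentiableAt_const _) hγ1'
    rw [pd_add (f := fun z => (u 0 z * u 0 z + u 1 z * u 1 z + u 2 z * u 2 z) / 2) (diffAt_div (f := fun z => u 0 z * u 0 z + u 1 z * u 1 z + u 2 z * u 2 z) ((hq0.add hq1).add hq2) (differentiableAt_const _) (by norm_num : (2:ℝ) ≠ 0)) hPd,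
        pd_div_const (f := fun z => u 0 z * u 0 z + u 1 z * u 1 z + u 2 z * u 2 z) ((hq0.add hq1).add hq2) 2, pd_add (f := fun z => u 0 z * u 0 z + u 1 z * u 1 z) (hq0.add hq1) hq2, pd_add hq0 hq1,
        pd_mul (hud 0 y hy) (hud 0 y hy), pd_mul (hud 1 y hy) (hud 1 y hy),
        pd_mul (hud 2 y hy) (hud 2 y hy), hpress2 y hy i] at hc
    linear_combination hc
  -- vorticity is parallel to velocity : cross product components vanish
  have hcr0 : ∀ y ∈ U, u 1 y * (pd 0 (u 1) y - pd 1 (u 0) y)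
      - u 2 y * (pd 2 (u 0) y - pd 0 (u 2) y) = 0 := by
    intro y hy; linear_combination hB 0 y hy - heuler 0 y hy
  have hcr1 : ∀ y ∈ U, u 2 y * (pd 1 (u 2) y - pd 2 (u 1) y)
      - u 0 y * (pd 0 (u 1) y - pd 1 (u 0) y) = 0 := by
    intro y hy; linear_combination hB 1 y hy - heuler 1 y hy
  have hcr2 : ∀ y ∈ U, u 0 y * (pd 2 (u 0) y - pd 0 (u 2) y)
      - u 1 y * (pd 1 (u 2) y - pd 2 (u 1) y) = 0 := by
    intro y hy; linear_combination hB 2 y hy - heuler 2 y hy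
  -- the proportionality function
  set lam : (Fin 3 → ℝ) → ℝ := fun y =>
    (u 0 y * curl u 0 y + u 1 y * curl u 1 y + u 2 y * curl u 2 y)
      / (u 0 y ^ 2 + u 1 y ^ 2 + u 2 y ^ 2) with hlam
  have hpar0 : ∀ y ∈ U, curl u 0 y = lam y * u 0 y := by
    intro y hy
    simp only [hlam]
    rw [div_mul_eq_mul_div, eq_div_iff (hn2pos y hy).ne']
    simp only [hcurl0, hcurl1, hcurl2]
    linear_combination (-(u 1 y)) * hcr2 y hy + u 2 y * hcr1 y hy
  have hpar1 : ∀ y ∈ U, curl u 1 y = lam y * u 1 y := by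
    intro y hy
    simp only [hlam]
    rw [div_mul_eq_mul_div, eq_div_iff (hn2pos y hy).ne']
    simp only [hcurl0, hcurl1, hcurl2]
    linear_combination (-(u 2 y)) * hcr0 y hy + u 0 y * hcr2 y hy
  have hpar2 : ∀ y ∈ U, curl u 2 y = lam y * u 2 y := by
    intro y hy
    simp only [hlam]
    rw [div_mul_eq_mul_div, eq_div_iff (hn2pos y hy).ne']
    simp only [hcurl0, hcurl1, hcurl2]
    linear_combination (-(u 0 y)) * hcr1 y hy + u 1 y * hcr0 y hy
  -- now fix x
  intro x hx
  have hlamd : DifferentiableAt ℝ lam x := by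
    rw [hlam]
    exact diffAt_div
      ((((hud 0 x hx).mul (hwd0 x hx)).add ((hud 1 x hx).mul (hwd1 x hx))).add
        ((hud 2 x hx).mul (hwd2 x hx)))
      ((((hud 0 x hx).pow 2).add ((hud 1 x hx).pow 2)).add ((hud 2 x hx).pow 2))
      (hn2pos x hx).ne'
  -- divergence of curl vanishes
  have hdivcurl : pd 0 (curl u 0) x + pd 1 (curl u 1) x + pd 2 (curl u 2) x = 0 := by
    rw [hcurl0, hcurl1, hcurl2,
        pd_sub (hpdud 2 1 x hx) (hpdud 1 2 x hx),
        pd_sub (hpdud 0 2 x hx) (hpdud 2 0 x hx),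
        pd_sub (hpdud 1 0 x hx) (hpdud 0 1 x hx)]
    have e0 := pd_comm (hucd 0 x hx) 1 2
    have e1 := pd_comm (hucd 1 x hx) 0 2
    have e2 := pd_comm (hucd 2 x hx) 0 1
    linarith
  -- divergence identity for lam * u
  have h90 : pd 0 (curl u 0) x = pd 0 lam x * u 0 x + lam x * pd 0 (u 0) x := by
    rw [pd_congr (g := fun y => lam y * u 0 y)
      (Filter.eventuallyEq_of_mem (hU.mem_nhds hx) (fun y hy => hpar0 y hy))]
    exact pd_mul hlamd (hud 0 x hx)
  have h91 : pd 1 (curl u 1) x = pd 1 lam x * u 1 x + lam x * pd 1 (u 1) x := by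
    rw [pd_congr (g := fun y => lam y * u 1 y)
      (Filter.eventuallyEq_of_mem (hU.mem_nhds hx) (fun y hy => hpar1 y hy))]
    exact pd_mul hlamd (hud 1 x hx)
  have h92 : pd 2 (curl u 2) x = pd 2 lam x * u 2 x + lam x * pd 2 (u 2) x := by
    rw [pd_congr (g := fun y => lam y * u 2 y)
      (Filter.eventuallyEq_of_mem (hU.mem_nhds hx) (fun y hy => hpar2 y hy))]
    exact pd_mul hlamd (hud 2 x hx)
  have h9sum : pd 0 lam x * u 0 x + pd 1 lam x * u 1 x + pd 2 lam x * u 2 x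
      + lam x * (pd 0 (u 0) x + pd 1 (u 1) x + pd 2 (u 2) x) = 0 := by
    have := hdivcurl
    rw [h90, h91, h92] at this
    linarith
  -- the target function equals lam / ρ
  have hfeq : (fun y => uw y / (ρ y * n2 y)) = fun y => lam y / ρ y := by
    funext y
    simp only [hlam, huw, hn2]
    rw [div_div, mul_comm (ρ y)]
  rw [hfeq]
  rw [pd_div hlamd (hρd x hx) (hρpos x hx).ne', pd_div hlamd (hρd x hx) (hρpos x hx).ne',
      pd_div hlamd (hρd x hx) (hρpos x hx).ne']
  have hm := hmass' x hx
  linear_combination (ρ x / ρ x ^ 2) * h9sum - (lam x / ρ x ^ 2) * hm
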